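/- Non-existence via iteration (part ii of Lemma 2.6): Let α, β, r_0 > 0, m > 1, ε ∈ (0,1), and suppose ψ ∈ C^1([r_0,∞)) is nondecreasing and satisfies αψ(r) − βψ(r+1−ε) + (ψ'(r))^m ≥ f(r) for all r > r_0, where f is nondecreasing with f(r) → ∞. Given a > m, there exists ε_0(a,m) ∈ (0,1) such that if ε < ε_0, no such ψ can satisfy ψ(r) ≥ c·exp(a^{r−1}) for all large r (for any c > 0). -/

import Mathlib

/-!
Write `η = 1 - ε - δ` with `m < a ^ δ`. Far out, `αψ ≥ 1`, `f ≥ 0` and `ψ' ≥ 0`, so the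
inequality gives `(β ψ(s + 1 - ε) / 2) ^ (1/m) ≤ αψ(s) + ψ'(s)`. Integrating `(e^{αs} ψ)'` over
`[r - η, r]` turns a lower bound `ψ ≥ M exp (K a^t)` into `ψ ≥ M' exp (K (a^δ / m) a^t)`, because
`s + 1 - ε ≥ r + δ` there. For `M` small the constant reproduces itself, so iterating gives
`ψ(r) ≥ M exp (K γ^n a^r)` for every `n` with `γ = a^δ / m > 1`, which is absurd.
-/

open Filter Real Set

lemma exists_mem_Ioo_lt_rpow {m a : ℝ} (hm : 1 < m) (ha : m < a) :
    ∃ δ ∈ Ioo (0 : ℝ) 1, m < a ^ δ := by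
  have ha1 : 1 < a := hm.trans ha
  have hlog0 : 0 < logb a m := logb_pos ha1 hm
  have hlog1 : logb a m < 1 := by
    rw [logb, div_lt_one (log_pos ha1)]
    exact log_lt_log (by linarith) ha
  refine ⟨(logb a m + 1) / 2, ⟨by linarith, by linarith⟩, ?_⟩
  calc m = a ^ logb a m := (rpow_logb (by linarith) ha1.ne' (by linarith)).symm
    _ < a ^ ((logb a m + 1) / 2) := rpow_lt_rpow_of_exponent_lt ha1 (by linarith)

lemma exists_pos_le_mul_rpow_inv {m c D : ℝ} (hm : 1 < m) (hc : 0 < c) (hD : 0 < D) :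
    ∃ M, 0 < M ∧ M ≤ c ∧ M ≤ D * M ^ m⁻¹ := by
  set M := min c (D ^ (m / (m - 1)))
  have hM : 0 < M := lt_min hc (by positivity)
  refine ⟨M, hM, min_le_left _ _, ?_⟩
  have hexp : m / (m - 1) * (1 - m⁻¹) = 1 := by
    field_simp [(by linarith : m - 1 ≠ 0)]
  have hpow : M ^ (1 - m⁻¹) ≤ D := calc
    M ^ (1 - m⁻¹) ≤ (D ^ (m / (m - 1))) ^ (1 - m⁻¹) :=
      rpow_le_rpow hM.le (min_le_right _ _) (by linarith [inv_lt_one_of_one_lt₀ hm])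
    _ = D := by rw [← rpow_mul hD.le, hexp, rpow_one]
  calc M = M ^ (1 - m⁻¹) * M ^ m⁻¹ := by rw [← rpow_add hM, sub_add_cancel, rpow_one]
    _ ≤ D * M ^ m⁻¹ := by gcongr

lemma div_two_rpow_inv_le_add {m x y B : ℝ} (hm : 1 ≤ m) (hx : 1 ≤ x) (hy : 0 ≤ y)
    (hB : 0 ≤ B) (h : B ≤ x + y ^ m) : (B / 2) ^ m⁻¹ ≤ x + y := by
  have hxy : 1 ≤ x + y := by linarith
  rw [rpow_inv_le_iff_of_pos (by positivity) (by linarith) (by linarith)]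
  have hx' : x ≤ (x + y) ^ m := (le_add_of_nonneg_right hy).trans (self_le_rpow_of_one_le hxy hm)
  have hy' : y ^ m ≤ (x + y) ^ m := rpow_le_rpow hy (by linarith) (by linarith)
  linarith

/-- Mean value theorem for the integrating factor: `(e^{αs} ψ(s))' = e^{αs} (αψ(s) + ψ'(s))`. -/
lemma mul_exp_neg_mul_le_of_le_add_deriv {ψ ψ' : ℝ → ℝ} {α L u r : ℝ} (hα : 0 ≤ α)
    (hL : 0 ≤ L) (hur : u ≤ r) (hψ : ∀ s ∈ Icc u r, HasDerivAt ψ (ψ' s) s) (hψu : 0 ≤ ψ u)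
    (h : ∀ s ∈ Icc u r, L ≤ α * ψ s + ψ' s) :
    (r - u) * exp (-(α * (r - u))) * L ≤ ψ r := by
  have hg : ∀ s ∈ Icc u r, HasDerivAt (fun t => exp (α * t) * ψ t)
      (exp (α * s) * (α * ψ s + ψ' s)) s := by
    intro s hs
    have hexp : HasDerivAt (fun t => exp (α * t)) (exp (α * s) * α) s := by
      simpa using ((hasDerivAt_id s).const_mul α).exp
    exact (hexp.mul (hψ s hs)).congr_deriv (by ring)
  have hgrowth : exp (α * u) * L * (r - u) ≤ exp (α * r) * ψ r - exp (α * u) * ψ u :=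
    (convex_Icc u r).mul_sub_le_image_sub_of_le_deriv
      (fun s hs => (hg s hs).continuousAt.continuousWithinAt)
      (fun s hs => (hg s (interior_subset hs)).differentiableAt.differentiableWithinAt)
      (fun s hs => by
        have hs' := interior_subset hs
        rw [(hg s hs').deriv]
        exact mul_le_mul (exp_le_exp.2 (by nlinarith [hs'.1])) (h s hs') hL (exp_pos _).le)
      u (left_mem_Icc.2 hur) r (right_mem_Icc.2 hur) hur
  have hgu : 0 ≤ exp (α * u) * ψ u := mul_nonneg (exp_pos _).le hψu
  calc (r - u) * exp (-(α * (r - u))) * L = exp (-(α * r)) * (exp (α * u) * L * (r - u)) := by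
        rw [show -(α * (r - u)) = -(α * r) + α * u by ring, exp_add]; ring
    _ ≤ exp (-(α * r)) * (exp (α * r) * ψ r) :=
        mul_le_mul_of_nonneg_left (by linarith) (exp_pos _).le
    _ = ψ r := by rw [← mul_assoc, ← exp_add, neg_add_cancel, exp_zero, one_mul]

def HasDoubleExpLowerBound (ψ : ℝ → ℝ) (R M K a : ℝ) : Prop :=
  ∀ t, R ≤ t → M * exp (K * a ^ t) ≤ ψ t

namespace HasDoubleExpLowerBound

variable {ψ ψ' : ℝ → ℝ} {R M K a : ℝ}

lemma mono_const {M' : ℝ} (h : HasDoubleExpLowerBound ψ R M K a) (hM : M' ≤ M) :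
    HasDoubleExpLowerBound ψ R M' K a :=
  fun t ht => (mul_le_mul_of_nonneg_right hM (exp_pos _).le).trans (h t ht)

section Step

variable {α B η δ m : ℝ} (hα : 0 ≤ α) (hB : 0 ≤ B) (hη : 0 < η) (hδ : 0 ≤ δ) (hm : 0 < m)
  (ha : 1 ≤ a) (hψ : ∀ s, R - η ≤ s → HasDerivAt ψ (ψ' s) s) (hψ0 : ∀ s, R - η ≤ s → 0 ≤ ψ s)
  (hkey : ∀ s, R - η ≤ s → (B * ψ (s + η + δ)) ^ m⁻¹ ≤ α * ψ s + ψ' s)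
include hα hB hη hδ hm ha hψ hψ0 hkey

lemma step (hM : 0 ≤ M) (hK : 0 ≤ K) (h : HasDoubleExpLowerBound ψ R M K a) :
    HasDoubleExpLowerBound ψ R (η * exp (-(α * η)) * B ^ m⁻¹ * M ^ m⁻¹) (K * a ^ δ / m) a := by
  intro r hr
  set L := (B * (M * exp (K * a ^ (r + δ)))) ^ m⁻¹
  have hL : ∀ s ∈ Icc (r - η) r, L ≤ α * ψ s + ψ' s := by
    intro s hs
    have hshift : r + δ ≤ s + η + δ := by linarith [hs.1]
    refine le_trans (rpow_le_rpow (by positivity) (mul_le_mul_of_nonneg_left ?_ hB)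
      (by positivity)) (hkey s (by linarith [hs.1]))
    calc M * exp (K * a ^ (r + δ)) ≤ M * exp (K * a ^ (s + η + δ)) := by gcongr
      _ ≤ ψ (s + η + δ) := h _ (by linarith)
  have hint := mul_exp_neg_mul_le_of_le_add_deriv hα (by positivity) (by linarith : r - η ≤ r)
    (fun s hs => hψ s (by linarith [hs.1])) (hψ0 _ (by linarith)) hL
  rw [show r - (r - η) = η by ring] at hint
  convert hint using 1
  dsimp only [L]
  rw [mul_rpow hB (by positivity), mul_rpow hM (exp_pos _).le, ← exp_mul,
    rpow_add (by linarith)]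
  ring_nf

lemma iterate (hM : 0 ≤ M) (hK : 0 ≤ K) (hfix : M ≤ η * exp (-(α * η)) * B ^ m⁻¹ * M ^ m⁻¹)
    (h : HasDoubleExpLowerBound ψ R M K a) (n : ℕ) :
    HasDoubleExpLowerBound ψ R M (K * (a ^ δ / m) ^ n) a := by
  induction n with
  | zero => simpa using h
  | succ n ih =>
    have hnext := step hα hB hη hδ hm ha hψ hψ0 hkey hM (by positivity) ih
    convert hnext.mono_const hfix using 2
    ring

end Step

lemma not_forall_pow {γ : ℝ} (hγ : 1 < γ) (hM : 0 < M) (hK : 0 < K) (ha : 0 < a) :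
    ¬ ∀ n : ℕ, HasDoubleExpLowerBound ψ R M (K * γ ^ n) a := by
  intro h
  have hlim : Tendsto (fun n : ℕ => M * exp (K * γ ^ n * a ^ R)) atTop atTop := by
    refine (tendsto_exp_atTop.comp ?_).const_mul_atTop hM
    exact ((tendsto_pow_atTop_atTop_of_one_lt hγ).const_mul_atTop
      (mul_pos hK (rpow_pos_of_pos ha R))).congr fun n => by ring
  obtain ⟨n, hn⟩ := (hlim.eventually_gt_atTop (ψ R)).exists
  exact (h n R le_rfl).not_gt hn

end HasDoubleExpLowerBound

theorem stmt7_general (α β r0 m a : ℝ) (hα : 0 < α) (hβ : 0 < β)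
    (hm : 1 < m) (ha : m < a)
    (f : ℝ → ℝ) (hftop : Tendsto f atTop atTop) :
    ∃ ε0 ∈ Set.Ioo (0 : ℝ) 1, ∀ ε ∈ Set.Ioo (0 : ℝ) ε0,
      ∀ ψ : ℝ → ℝ,
        (∀ r ∈ Set.Ici r0, HasDerivAt ψ (deriv ψ r) r) →
        ContinuousOn (deriv ψ) (Set.Ici r0) →
        MonotoneOn ψ (Set.Ici r0) →
        (∀ r, r0 < r → f r ≤ α * ψ r - β * ψ (r + 1 - ε) + (deriv ψ r) ^ m) →
        ∀ c : ℝ, 0 < c →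
          ¬ (∀ᶠ r in atTop, c * Real.exp (a ^ (r - 1)) ≤ ψ r) := by
  obtain ⟨δ, ⟨hδ0, hδ1⟩, hmδ⟩ := exists_mem_Ioo_lt_rpow hm ha
  have ha0 : 0 < a := by linarith
  refine ⟨1 - δ, ⟨by linarith, by linarith⟩, ?_⟩
  rintro ε ⟨hε0, hε⟩ ψ hψ - hmono hineq c hc hlow
  set η := 1 - ε - δ
  have hη : 0 < η := by linarith
  have hgrow : Tendsto (fun s : ℝ => α * (c * exp (a ^ (s - 1)))) atTop atTop :=
    ((tendsto_exp_atTop.comp ((tendsto_rpow_atTop_of_base_gt_one a (by linarith)).comp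
      (tendsto_atTop_add_const_right _ (-1) tendsto_id))).const_mul_atTop hc).const_mul_atTop hα
  obtain ⟨R, hR⟩ := eventually_atTop.1 <| (eventually_gt_atTop r0).and <|
    (hftop.eventually_ge_atTop 0).and <| (hgrow.eventually_ge_atTop 1).and hlow
  have hψ0 : ∀ s, R ≤ s → 0 ≤ ψ s := fun s hs => (hR s hs).2.2.2.trans' (by positivity)
  have hkey : ∀ s, R + 1 - η ≤ s → (β / 2 * ψ (s + η + δ)) ^ m⁻¹ ≤ α * ψ s + deriv ψ s := by
    intro s hs
    obtain ⟨hr0s, hfs, hαc, hψc⟩ := hR s (by linarith)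
    have hψ'0 : 0 ≤ deriv ψ s := by
      rw [← derivWithin_of_mem_nhds (Ici_mem_nhds hr0s)]
      exact hmono.derivWithin_nonneg
    rw [show s + η + δ = s + 1 - ε by ring, div_mul_eq_mul_div]
    exact div_two_rpow_inv_le_add hm.le (hαc.trans (by gcongr)) hψ'0
      (mul_nonneg hβ.le (hψ0 _ (by linarith))) (by linarith [hineq s hr0s])
  obtain ⟨M, hM0, hMc, hMfix⟩ := exists_pos_le_mul_rpow_inv hm hc
    (by positivity : 0 < η * exp (-(α * η)) * (β / 2) ^ m⁻¹)
  have hbase : HasDoubleExpLowerBound ψ (R + 1) M a⁻¹ a := fun t ht => by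
    rw [← div_eq_inv_mul, ← rpow_sub_one ha0.ne']
    exact (mul_le_mul_of_nonneg_right hMc (exp_pos _).le).trans (hR t (by linarith)).2.2.2
  have hγ : 1 < a ^ δ / m := (one_lt_div (by linarith)).2 hmδ
  exact HasDoubleExpLowerBound.not_forall_pow hγ hM0 (inv_pos.2 ha0) ha0 <|
    hbase.iterate hα.le (by positivity) hη hδ0.le (by linarith) (by linarith)
      (fun s hs => hψ s (hR s (by linarith)).1.le) (fun s hs => hψ0 s (by linarith)) hkey
      hM0.le (inv_pos.2 ha0).le hMfix

/-- Non-existence via iteration: if `ψ` is a nondecreasing `C¹` solution of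
`αψ(r) − βψ(r+1−ε) + (ψ'(r))^m ≥ f(r)` for `r > r₀`, with `f` nondecreasing and
tending to `∞`, and `a > m`, then for `ε` small enough (depending on `a, m`)
`ψ` cannot satisfy `ψ(r) ≥ c·exp(a^{r−1})` for all large `r`. -/
theorem stmt7 (α β r0 m a : ℝ) (hα : 0 < α) (hβ : 0 < β) (hr0 : 0 < r0)
    (hm : 1 < m) (ha : m < a)
    (f : ℝ → ℝ) (hf : Monotone f) (hftop : Tendsto f atTop atTop) :
    ∃ ε0 ∈ Set.Ioo (0 : ℝ) 1, ∀ ε ∈ Set.Ioo (0 : ℝ) ε0,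
      ∀ ψ : ℝ → ℝ,
        (∀ r ∈ Set.Ici r0, HasDerivAt ψ (deriv ψ r) r) →
        ContinuousOn (deriv ψ) (Set.Ici r0) →
        MonotoneOn ψ (Set.Ici r0) →
        (∀ r, r0 < r → f r ≤ α * ψ r - β * ψ (r + 1 - ε) + (deriv ψ r) ^ m) →
        ∀ c : ℝ, 0 < c →
          ¬ (∀ᶠ r in atTop, c * Real.exp (a ^ (r - 1)) ≤ ψ r) :=
  stmt7_general α β r0 m a hα hβ hm ha f hftop
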